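/- Let U = (ρ, v, u, F₁₁, F₂₁, F₁₂, F₂₂) with ρ > 0, p'(ρ) =: c² > 0, and let Φ be a function with ∂₂Φ ≠ 0 satisfying the eikonal conditions ∂ₜΦ + v ∂₁Φ − u = 0, F₁₁ ∂₁Φ − F₂₁ = 0 and F₁₂ ∂₁Φ − F₂₂ = 0. Let A₁(U) and A₂(U) be the 7×7 flux Jacobian matrices of the 2D compressible elastodynamics system (in the variables (ρ, v, u, F₁₁, F₂₁, F₁₂, F₂₂)), and define the boundary matrix Ã₂ = (1/∂₂Φ)(A₂(U) − ∂ₜΦ·I − ∂₁Φ·A₁(U)). Then the characteristic polynomial of Ã₂ is det(λI − Ã₂) = λ⁵ (λ² − c²(1 + (∂₁Φ)²)/(∂₂Φ)²). In particular Ã₂ has rank 2, with eigenvalues 0 (multiplicity 5) and ± c√(1+(∂₁Φ)²)/∂₂Φ (each simple). -/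

import Mathlib

/-!
Under the eikonal conditions the transport terms `u - ∂ₜΦ - v ∂₁Φ` and the elastic couplings
`F₂ⱼ - F₁ⱼ ∂₁Φ` cancel, so `Ã₂ = U V` with `U` of size `7 × 2` and `V` of size `2 × 7`.
Sylvester's identity `det (λ - U V) = λ⁵ det (λ - V U)` reduces the characteristic polynomial
to that of `V U = [[0, ρ(1 + ∂₁Φ²)/∂₂Φ], [c²/(ρ ∂₂Φ), 0]]`, and since `V U` is invertible,
`U V` has rank `2`.
-/

namespace Matrix

variable {m n R : Type*} [Fintype m] [Fintype n] [DecidableEq n]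

theorem det_smul_one_sub_mul_comm [DecidableEq m] [CommRing R] (A : Matrix m n R)
    (B : Matrix n m R) (hle : Fintype.card n ≤ Fintype.card m) (t : R) :
    (t • 1 - A * B).det = t ^ (Fintype.card m - Fintype.card n) * (t • 1 - B * A).det := by
  simpa [eval_charpoly, smul_one_eq_diagonal] using
    congrArg (Polynomial.eval t) (charpoly_mul_comm_of_le A B hle)

theorem rank_mul_eq_card_of_isUnit_mul_comm [CommRing R] [StrongRankCondition R]
    (A : Matrix m n R) (B : Matrix n m R) (h : IsUnit (B * A)) :
    (A * B).rank = Fintype.card n := by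
  refine le_antisymm ((rank_mul_le_left A B).trans A.rank_le_card_width) ?_
  calc Fintype.card n = (B * A * (B * A)).rank := (rank_of_isUnit _ (h.mul h)).symm
    _ = (B * (A * B) * A).rank := by simp only [Matrix.mul_assoc]
    _ ≤ (B * (A * B)).rank := rank_mul_le_left _ _
    _ ≤ (A * B).rank := rank_mul_le_right _ _

theorem det_smul_one_sub_antidiag [CommRing R] (t a b : R) :
    (t • 1 - !![0, a; b, 0]).det = t ^ 2 - a * b := by
  simp [det_fin_two]
  ring

end Matrix

/-- Under the eikonal conditions, the boundary matrix
`Ã₂ = (1/∂₂Φ)(A₂(U) − ∂ₜΦ·I − ∂₁Φ·A₁(U))` of the 2D compressible elastodynamics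
system has characteristic polynomial `λ⁵(λ² − c²(1 + (∂₁Φ)²)/(∂₂Φ)²)`;
in particular it has rank 2. -/
theorem boundary_matrix_charpoly_and_rank
    (ρ v u F11 F21 F12 F22 c dt d1 d2 : ℝ)
    (hρ : 0 < ρ) (hc : 0 < c) (hd2 : d2 ≠ 0)
    (heik1 : dt + v * d1 - u = 0)
    (heik2 : F11 * d1 - F21 = 0)
    (heik3 : F12 * d1 - F22 = 0) :
    let A1 : Matrix (Fin 7) (Fin 7) ℝ :=
      !![v, ρ, 0, 0, 0, 0, 0;
         c ^ 2 / ρ, v, 0, -F11, 0, -F12, 0;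
         0, 0, v, 0, -F11, 0, -F12;
         0, -F11, 0, v, 0, 0, 0;
         0, 0, -F11, 0, v, 0, 0;
         0, -F12, 0, 0, 0, v, 0;
         0, 0, -F12, 0, 0, 0, v]
    let A2 : Matrix (Fin 7) (Fin 7) ℝ :=
      !![u, 0, ρ, 0, 0, 0, 0;
         0, u, 0, -F21, 0, -F22, 0;
         c ^ 2 / ρ, 0, u, 0, -F21, 0, -F22;
         0, -F21, 0, u, 0, 0, 0;
         0, 0, -F21, 0, u, 0, 0;
         0, -F22, 0, 0, 0, u, 0;
         0, 0, -F22, 0, 0, 0, u]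
    let At : Matrix (Fin 7) (Fin 7) ℝ :=
      (d2)⁻¹ • (A2 - dt • (1 : Matrix (Fin 7) (Fin 7) ℝ) - d1 • A1)
    (∀ lam : ℝ,
        Matrix.det (lam • (1 : Matrix (Fin 7) (Fin 7) ℝ) - At) =
          lam ^ 5 * (lam ^ 2 - c ^ 2 * (1 + d1 ^ 2) / d2 ^ 2)) ∧
    At.rank = 2 := by
  intro A1 A2 At
  set U : Matrix (Fin 7) (Fin 2) ℝ := !![1, 0; 0, -d1; 0, 1; 0, 0; 0, 0; 0, 0; 0, 0]
  set W : Matrix (Fin 2) (Fin 7) ℝ := !![0, -(d1 * ρ), ρ, 0, 0, 0, 0; c ^ 2 / ρ, 0, 0, 0, 0, 0, 0]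
  have hfac : At = U * (d2⁻¹ • W) := by
    obtain rfl : u = dt + v * d1 := by linarith
    obtain rfl : F21 = F11 * d1 := by linarith
    obtain rfl : F22 = F12 * d1 := by linarith
    suffices A2 - dt • 1 - d1 • A1 = U * W by rw [Matrix.mul_smul, ← this]
    ext i j
    fin_cases i <;> fin_cases j <;> simp [A1, A2, U, W, Matrix.mul_apply, Fin.sum_univ_two] <;> ring
  have hWU : d2⁻¹ • W * U = !![0, ρ * (1 + d1 ^ 2) / d2; c ^ 2 / (ρ * d2), 0] := by
    ext i j
    fin_cases i <;> fin_cases j <;> simp [U, W, Matrix.mul_apply, Fin.sum_univ_succ] <;> ring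
  rw [hfac]
  refine ⟨fun lam => ?_, ?_⟩
  · rw [Matrix.det_smul_one_sub_mul_comm _ _ (by simp), hWU, Fintype.card_fin, Fintype.card_fin]
    congr 1
    rw [Matrix.det_smul_one_sub_antidiag]
    field_simp
  · refine Matrix.rank_mul_eq_card_of_isUnit_mul_comm _ _ ?_
    rw [hWU, Matrix.isUnit_iff_isUnit_det, Matrix.det_fin_two_of, isUnit_iff_ne_zero, zero_mul,
      zero_sub, neg_ne_zero]
    positivity
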